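/- For all p > 0, μ ∈ ℝ and y ∈ ℝ, the mixed partial derivative satisfies ∂/∂μ (∂E/∂y)(y,p,μ) = ∂²E/∂y²(y,p,μ) + 1/p, and this quantity is strictly positive. -/

import Mathlib

/-!
Write `K(y,p,μ) = Z(y+μ)` with `Z(s) = ∑ cₙ e^{sn}` and `cₙ = υⁿ/n! · e^{-apn²/2}`. Then
`∂E/∂y = -y/p + (log Z)'(y+μ)`, so `∂²E/∂y² = -1/p + (log Z)''(y+μ)` while
`∂²E/∂μ∂y = (log Z)''(y+μ)`. Finally `(log Z)''(s)` is the variance of `n` under the probability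
weights proportional to `cₙ e^{sn}`, which is positive because these weights charge more than one
point.
-/

/-- The single-cell partition function `K(y,p,μ)` with cell volume `υ` and ratio `a`. -/
noncomputable def K (υ a y p μ : ℝ) : ℝ :=
  ∑' n : ℕ, (υ ^ n / (Nat.factorial n : ℝ)) *
    Real.exp ((y + μ) * n - (a * p / 2) * (n : ℝ) ^ 2)

/-- The function `E(y,p,μ) = -y²/(2p) + ln K(y,p,μ)`. -/
noncomputable def E (υ a y p μ : ℝ) : ℝ :=
  -(y ^ 2) / (2 * p) + Real.log (K υ a y p μ)

open Real

theorem sq_tsum_mul_lt_tsum_mul_tsum_sq {w : ℕ → ℝ} (hw : ∀ n, 0 < w n) (h₀ : Summable w)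
    (h₁ : Summable fun n : ℕ => (n : ℝ) * w n) (h₂ : Summable fun n : ℕ => (n : ℝ) ^ 2 * w n) :
    (∑' n : ℕ, (n : ℝ) * w n) ^ 2 < (∑' n : ℕ, w n) * ∑' n : ℕ, (n : ℝ) ^ 2 * w n := by
  set A := ∑' n : ℕ, w n
  set B := ∑' n : ℕ, (n : ℝ) * w n
  set C := ∑' n : ℕ, (n : ℝ) ^ 2 * w n
  have hA : 0 < A := h₀.tsum_pos (fun n => (hw n).le) 0 (hw 0)
  -- `∑ (A n - B)² w_n = A (A C - B²)` is a sum of nonnegative terms, not all zero.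
  have hdev : HasSum (fun n : ℕ => (A * n - B) ^ 2 * w n) (A * (A * C - B ^ 2)) := by
    have hA' : HasSum w A := h₀.hasSum
    have hB' : HasSum (fun n : ℕ => (n : ℝ) * w n) B := h₁.hasSum
    have hC' : HasSum (fun n : ℕ => (n : ℝ) ^ 2 * w n) C := h₂.hasSum
    have h := (((hC'.mul_left (A ^ 2)).sub (hB'.mul_left (2 * A * B))).add
      (hA'.mul_left (B ^ 2))).congr_fun (g := fun n : ℕ => (A * n - B) ^ 2 * w n) fun n => by ring
    rwa [show A ^ 2 * C - 2 * A * B * B + B ^ 2 * A = A * (A * C - B ^ 2) by ring] at h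
  obtain ⟨i, hi⟩ : ∃ i : ℕ, A * i - B ≠ 0 := by
    by_contra! h
    have h0 := h 0
    have h1 := h 1
    push_cast at h0 h1
    linarith
  have hpos : 0 < A * (A * C - B ^ 2) :=
    hdev.tsum_eq ▸ hdev.summable.tsum_pos (fun n => by have := hw n; positivity) i
      (by have := hw i; positivity)
  nlinarith [pos_of_mul_pos_right hpos hA.le]

noncomputable def expMoment (c : ℕ → ℝ) (k : ℕ) (s : ℝ) : ℝ :=
  ∑' n : ℕ, (n : ℝ) ^ k * (c n * exp (s * n))

noncomputable def expMean (c : ℕ → ℝ) (s : ℝ) : ℝ :=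
  expMoment c 1 s / expMoment c 0 s

noncomputable def expVariance (c : ℕ → ℝ) (s : ℝ) : ℝ :=
  expMoment c 2 s / expMoment c 0 s - expMean c s ^ 2

def SummableExpMoments (c : ℕ → ℝ) : Prop :=
  ∀ (k : ℕ) (s : ℝ), Summable fun n : ℕ => (n : ℝ) ^ k * (c n * exp (s * n))

section ExpMoment

variable {c : ℕ → ℝ}

theorem hasDerivAt_expMoment
    (hsum : SummableExpMoments c) (hc : ∀ n, 0 ≤ c n) (k : ℕ) (s : ℝ) :
    HasDerivAt (expMoment c k) (expMoment c (k + 1) s) s := by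
  unfold expMoment
  refine hasDerivAt_tsum_of_isPreconnected (t := Set.Ioo (s - 1) (s + 1)) (hsum (k + 1) (s + 1))
    isOpen_Ioo isPreconnected_Ioo
    (g := fun (n : ℕ) (t : ℝ) => (n : ℝ) ^ k * (c n * exp (t * n)))
    (g' := fun (n : ℕ) (t : ℝ) => (n : ℝ) ^ (k + 1) * (c n * exp (t * n)))
    (fun n t _ => ?_) (fun n t ht => ?_) (Set.mem_Ioo.2 ⟨by linarith, by linarith⟩) (hsum k s)
    (Set.mem_Ioo.2 ⟨by linarith, by linarith⟩)
  · exact ((((hasDerivAt_id t).mul_const (n : ℝ)).exp.const_mul (c n)).const_mul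
      ((n : ℝ) ^ k)).congr_deriv (by simp only [id]; ring)
  · have hexp : exp (t * n) ≤ exp ((s + 1) * n) :=
      exp_le_exp.2 (mul_le_mul_of_nonneg_right ht.2.le n.cast_nonneg)
    rw [Real.norm_of_nonneg (by have := hc n; positivity)]
    gcongr
    exact hc n

theorem expMoment_zero_pos
    (hsum : SummableExpMoments c) (hc : ∀ n, 0 < c n) (s : ℝ) : 0 < expMoment c 0 s :=
  (hsum 0 s).tsum_pos (fun n => by have := hc n; positivity) 0 (by have := hc 0; positivity)

theorem expVariance_pos
    (hsum : SummableExpMoments c) (hc : ∀ n, 0 < c n) (s : ℝ) : 0 < expVariance c s := by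
  have hlt : expMoment c 1 s ^ 2 < expMoment c 0 s * expMoment c 2 s := by
    simpa only [expMoment, pow_zero, one_mul, pow_one] using
      sq_tsum_mul_lt_tsum_mul_tsum_sq (w := fun n => c n * exp (s * n))
        (fun n => by have := hc n; positivity) (by simpa using hsum 0 s)
        (by simpa using hsum 1 s) (hsum 2 s)
  have hM := expMoment_zero_pos hsum hc s
  rw [expVariance, expMean, sub_pos, div_pow, div_lt_div_iff₀ (by positivity) hM]
  nlinarith

theorem hasDerivAt_log_expMoment_zero
    (hsum : SummableExpMoments c) (hc : ∀ n, 0 < c n) (s : ℝ) :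
    HasDerivAt (fun t => log (expMoment c 0 t)) (expMean c s) s :=
  (hasDerivAt_expMoment hsum (fun n => (hc n).le) 0 s).log (expMoment_zero_pos hsum hc s).ne'

theorem hasDerivAt_expMean
    (hsum : SummableExpMoments c) (hc : ∀ n, 0 < c n) (s : ℝ) :
    HasDerivAt (expMean c) (expVariance c s) s := by
  have hM := (expMoment_zero_pos hsum hc s).ne'
  refine ((hasDerivAt_expMoment hsum (fun n => (hc n).le) 1 s).div
    (hasDerivAt_expMoment hsum (fun n => (hc n).le) 0 s) hM).congr_deriv ?_
  rw [expVariance, expMean]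
  field_simp

end ExpMoment

noncomputable def cellWeight (υ a p : ℝ) (n : ℕ) : ℝ :=
  υ ^ n / n.factorial * exp (-(a * p / 2 * (n : ℝ) ^ 2))

theorem K_eq_expMoment (υ a y p μ : ℝ) :
    K υ a y p μ = expMoment (cellWeight υ a p) 0 (y + μ) := by
  refine tsum_congr fun n => ?_
  rw [cellWeight, pow_zero, one_mul, mul_assoc, ← exp_add, neg_add_eq_sub]

theorem cellWeight_pos {υ : ℝ} (hυ : 0 < υ) (a p : ℝ) (n : ℕ) : 0 < cellWeight υ a p n := by
  unfold cellWeight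
  positivity

-- The Gaussian factor is at most `1`, and `nᵏ ≤ k! eⁿ`, so the `k`-th moment is dominated by
-- the exponential series of `υ e^{s+1}`.
theorem summableExpMoments_cellWeight {υ a p : ℝ} (hυ : 0 ≤ υ) (hap : 0 ≤ a * p) :
    SummableExpMoments (cellWeight υ a p) := by
  intro k s
  refine Summable.of_nonneg_of_le (fun n => ?_) (fun n => ?_)
    ((summable_pow_div_factorial (υ * exp (s + 1))).mul_left (k.factorial : ℝ))
  · unfold cellWeight
    positivity
  · have hpow : (n : ℝ) ^ k ≤ k.factorial * exp n := by
      have := pow_div_factorial_le_exp (n : ℝ) n.cast_nonneg k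
      rwa [div_le_iff₀ (by positivity), mul_comm] at this
    have hgauss : exp (-(a * p / 2 * (n : ℝ) ^ 2)) ≤ 1 := exp_le_one_iff.2 (by
      have : 0 ≤ a * p / 2 * (n : ℝ) ^ 2 := by positivity
      linarith)
    calc (n : ℝ) ^ k * (cellWeight υ a p n * exp (s * n))
        ≤ (k.factorial * exp n) * (υ ^ n / n.factorial * 1 * exp (s * n)) := by
          unfold cellWeight
          gcongr
      _ = k.factorial * ((υ * exp (s + 1)) ^ n / n.factorial) := by
          rw [mul_pow, ← exp_nat_mul, show (n : ℝ) * (s + 1) = s * n + n by ring, exp_add]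
          field_simp

theorem hasDerivAt_E {υ a p : ℝ} (hυ : 0 < υ) (hap : 0 ≤ a * p) (y μ : ℝ) :
    HasDerivAt (fun y' => E υ a y' p μ) (-(y / p) + expMean (cellWeight υ a p) (y + μ)) y := by
  have hsq : HasDerivAt (fun y' : ℝ => -(y' ^ 2) / (2 * p)) (-(y / p)) y :=
    ((hasDerivAt_pow 2 y).neg.div_const (2 * p)).congr_deriv (by push_cast; ring)
  simp only [E, K_eq_expMoment]
  exact hsq.add ((hasDerivAt_log_expMoment_zero (summableExpMoments_cellWeight hυ.le hap)
    (cellWeight_pos hυ a p) (y + μ)).comp_add_const y μ)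

theorem stmt_12 (υ a : ℝ) (hυ : 0 < υ) (ha : 1 < a) (p μ y : ℝ) (hp : 0 < p) :
    deriv (fun μ' => deriv (fun y' => E υ a y' p μ') y) μ =
      deriv (deriv (fun y' => E υ a y' p μ)) y + 1 / p ∧
    0 < deriv (deriv (fun y' => E υ a y' p μ)) y + 1 / p := by
  have hap : 0 ≤ a * p := mul_nonneg (by linarith) hp.le
  set c := cellWeight υ a p
  have hsum := summableExpMoments_cellWeight hυ.le hap
  have hc := cellWeight_pos hυ a p
  have hE : ∀ μ', deriv (fun y' => E υ a y' p μ') = fun y' => -(y' / p) + expMean c (y' + μ') :=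
    fun μ' => funext fun y' => (hasDerivAt_E hυ hap y' μ').deriv
  have hyy : deriv (deriv fun y' => E υ a y' p μ) y = -(1 / p) + expVariance c (y + μ) := by
    rw [hE]
    exact (((hasDerivAt_id y).div_const p).neg.add
      ((hasDerivAt_expMean hsum hc (y + μ)).comp_add_const y μ)).deriv
  have hyμ : deriv (fun μ' => deriv (fun y' => E υ a y' p μ') y) μ = expVariance c (y + μ) := by
    simp only [hE]
    exact (((hasDerivAt_expMean hsum hc (y + μ)).comp_const_add y μ).const_add _).deriv
  rw [hyμ, hyy]
  exact ⟨by ring, by linarith [expVariance_pos hsum hc (y + μ)]⟩
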